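/- Let 𝒳 = [X,𝔖], 𝒴 = [Y,𝔗], 𝒵 = [Z,𝔘] be sequentially structured Banach spaces such that (X,Y,Z) is a compatible triple of Banach spaces. Assume that for each k ∈ ℤ there exist linear operators S_k : X+Y → X and T_k : X+Y+Z → Y+Z such that: (1) S_k + T_k is the identity on X+Y for every k ∈ ℤ; (2) ‖(S_k v_k)_{k∈ℤ}‖_𝔖 ≲ ‖v⃗‖_{𝔖+𝔗(e)} for all v⃗ ∈ 𝔖 + 𝔗(e); (3) ‖(T_k v_k)_{k∈ℤ}‖_{𝔗(e)} ≲ ‖v⃗‖_{𝔖+𝔗(e)} for all v⃗ ∈ 𝔖 + 𝔗(e); (4) ‖(T_k z_k)_{k∈ℤ}‖_𝔘 ≲ ‖z⃗‖_𝔘 for all z⃗ ∈ 𝔘. Then for every θ ∈ (0,1): (𝒳,𝒴)_θ ∩ (𝒳,𝒵)_θ = (𝒳,𝒴 ∩ 𝒵)_θ with equivalent norms, where 𝒴 ∩ 𝒵 = [Y ∩ Z, 𝔗 ∩ 𝔘]. -/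

import Mathlib

open scoped ENNReal NNReal
open Filter Topology

universe u v

/-- The axioms of a complete ("Banach") extended norm on a module over a normed field:
definiteness, the triangle inequality, homogeneity, and completeness of the finiteness
domain.  A Banach space continuously embedded into an ambient space `E` is encoded as such
an extended norm on `E`; the Banach space itself is the finiteness domain. -/
def IsBanachENorm (𝕜 : Type*) {E : Type*} [NormedField 𝕜] [AddCommGroup E] [Module 𝕜 E]
    (N : E → ℝ≥0∞) : Prop :=
  (∀ x : E, N x = 0 → x = 0) ∧
  (∀ x y : E, N (x + y) ≤ N x + N y) ∧
  (∀ (c : 𝕜) (x : E), N (c • x) ≤ (‖c‖₊ : ℝ≥0∞) * N x) ∧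
  (∀ f : ℕ → E, (∀ n, N (f n) ≠ ∞) →
    (∀ ε : ℝ≥0∞, 0 < ε → ∃ n₀ : ℕ, ∀ m, n₀ ≤ m → ∀ n, n₀ ≤ n → N (f m - f n) < ε) →
    ∃ x : E, N x ≠ ∞ ∧ Filter.Tendsto (fun n => N (f n - x)) Filter.atTop (nhds 0))

/-- A Banach space continuously embedded into the ambient space `E`, encoded as a complete
extended norm on `E`. -/
structure BanachENorm (𝕜 : Type*) (E : Type*) [NormedField 𝕜] [AddCommGroup E]
    [Module 𝕜 E] where
  toFun : E → ℝ≥0∞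
  isBanachENorm : IsBanachENorm 𝕜 toFun

/-- A sequence structure `𝔖` on the Banach space `X`: a Banach space of `X`-valued sequences
which is translation invariant, contains the single-entry sequences isometrically, and has
contractive coordinate projections. -/
structure SeqStructure (𝕜 : Type*) (E : Type*) [NormedField 𝕜] [AddCommGroup E] [Module 𝕜 E]
    (X : BanachENorm 𝕜 E) where
  toFun : (ℤ → E) → ℝ≥0∞
  isBanachENorm : IsBanachENorm 𝕜 toFun
  single : ∀ (v : E) (n : ℤ), toFun (fun k => if k = n then v else 0) = X.toFun v
  shift : ∀ (x : ℤ → E) (n : ℤ), toFun (fun k => x (k + n)) = toFun x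
  coord : ∀ (x : ℤ → E) (n : ℤ), X.toFun (x n) ≤ toFun x

/-- The `n`-th Cesàro mean `C_n x⃗ = (n+1)⁻¹ ∑_{m=0}^{n} x⃗⁽ᵐ⁾`, where `x⃗⁽ᵐ⁾` is the
truncation of `x⃗` to the indices `|k| ≤ m`. -/
noncomputable def cesaro (𝕜 : Type*) {E : Type*} [NormedField 𝕜] [AddCommGroup E]
    [Module 𝕜 E] (n : ℕ) (x : ℤ → E) : ℤ → E :=
  fun k => (n + 1 : 𝕜)⁻¹ • ∑ m ∈ Finset.range (n + 1), (if |k| ≤ (m : ℤ) then x k else 0)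

/-- An `ℓ∞`-sequence structure: the Cesàro operators are contractive. -/
def IsLinftySeqStructure {𝕜 E : Type*} [NormedField 𝕜] [AddCommGroup E] [Module 𝕜 E]
    {X : BanachENorm 𝕜 E} (S : SeqStructure 𝕜 E X) : Prop :=
  ∀ (n : ℕ) (x : ℤ → E), S.toFun (cesaro 𝕜 n x) ≤ S.toFun x

/-- A `c₀`-sequence structure: the Cesàro operators are contractive and `C_n x⃗ → x⃗` in `𝔖`
for every `x⃗ ∈ 𝔖`. -/
def IsC0SeqStructure {𝕜 E : Type*} [NormedField 𝕜] [AddCommGroup E] [Module 𝕜 E]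
    {X : BanachENorm 𝕜 E} (S : SeqStructure 𝕜 E X) : Prop :=
  IsLinftySeqStructure S ∧
    ∀ x : ℤ → E, S.toFun x ≠ ∞ →
      Filter.Tendsto (fun n => S.toFun (cesaro 𝕜 n x - x)) Filter.atTop (nhds 0)

/-- The extended norm of the sum of two extended-normed spaces. -/
noncomputable def enSum {V : Type*} [AddCommGroup V] (N M : V → ℝ≥0∞) : V → ℝ≥0∞ :=
  fun v => ⨅ w : V, N w + M (v - w)

/-- The extended norm of the intersection of two extended-normed spaces. -/
def enInter {V : Type*} (N M : V → ℝ≥0∞) : V → ℝ≥0∞ := fun v => max (N v) (M v)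

/-- The weighted sequence space `𝔖(a)`, `‖x⃗‖_{𝔖(a)} = ‖(a^k x_k)_k‖_𝔖`. -/
noncomputable def wtSeq {E : Type*} [AddCommGroup E] [Module ℝ E] (a : ℝ)
    (S : (ℤ → E) → ℝ≥0∞) : (ℤ → E) → ℝ≥0∞ :=
  fun x => S fun k => (a ^ k) • x k

/-- The sequentially structured interpolation extended norm with base number `b`:
`‖v‖_{(𝒳₀,𝒳₁)_{θ;b}} = inf { max_{j=0,1} ‖(b^{k(j-θ)} x_k)_k‖_{𝔖_j} : ∑_k x_k = v }`,
the sum converging in the sum space `X₀ + X₁` (the ambient space `E`). -/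
noncomputable def interpENormB {E : Type*} [NormedAddCommGroup E] [NormedSpace ℝ E] (b : ℝ)
    (S₀ S₁ : (ℤ → E) → ℝ≥0∞) (θ : ℝ) (v : E) : ℝ≥0∞ :=
  ⨅ (x : ℤ → E) (_ : HasSum x v),
    max (wtSeq (b ^ (-θ)) S₀ x) (wtSeq (b ^ (1 - θ)) S₁ x)

/-- The sequentially structured interpolation extended norm (base number `e`). -/
noncomputable def interpENorm {E : Type*} [NormedAddCommGroup E] [NormedSpace ℝ E]
    (S₀ S₁ : (ℤ → E) → ℝ≥0∞) (θ : ℝ) (v : E) : ℝ≥0∞ :=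
  ⨅ (x : ℤ → E) (_ : HasSum x v),
    max (wtSeq (Real.exp (-θ)) S₀ x) (wtSeq (Real.exp (1 - θ)) S₁ x)

/-- The mean-method formulation of the interpolation norm. -/
noncomputable def meanENorm {E : Type*} [AddCommGroup E] [Module ℝ E]
    (S₀ S₁ : (ℤ → E) → ℝ≥0∞) (θ : ℝ) (v : E) : ℝ≥0∞ :=
  ⨅ (x0 : ℤ → E) (x1 : ℤ → E) (_ : ∀ k : ℤ, x0 k + x1 k = v),
    wtSeq (Real.exp (-θ)) S₀ x0 + wtSeq (Real.exp (1 - θ)) S₁ x1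

/-- The dual extended norm on linear functionals. -/
noncomputable def dualENorm {E : Type*} [AddCommGroup E] [Module ℝ E] (N : E → ℝ≥0∞)
    (φ : E →ₗ[ℝ] ℝ) : ℝ≥0∞ :=
  ⨆ (x : E) (_ : N x ≤ 1), (‖φ x‖₊ : ℝ≥0∞)

/-- The dual sequence norm, via the pairing `⟨x⃗, x⃗*⟩ = ∑_k ⟨x_k, x*_k⟩`. -/
noncomputable def dualSeqENorm {E : Type*} [AddCommGroup E] [Module ℝ E]
    (S : (ℤ → E) → ℝ≥0∞) (Φ : ℤ → E →ₗ[ℝ] ℝ) : ℝ≥0∞ :=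
  ⨆ (x : ℤ → E) (_ : (Function.support x).Finite) (_ : S x ≤ 1),
    (‖∑ᶠ k : ℤ, Φ k (x k)‖₊ : ℝ≥0∞)

/-- The interpolation norm of the dual couple `(𝒳₀*,𝒳₁*)_θ`
(in its mean-method formulation). -/
noncomputable def dualInterpMean {E : Type*} [AddCommGroup E] [Module ℝ E]
    (S₀ S₁ : (ℤ → E) → ℝ≥0∞) (θ : ℝ) (φ : E →ₗ[ℝ] ℝ) : ℝ≥0∞ :=
  ⨅ (Φ₀ : ℤ → E →ₗ[ℝ] ℝ) (Φ₁ : ℤ → E →ₗ[ℝ] ℝ) (_ : ∀ k : ℤ, Φ₀ k + Φ₁ k = φ),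
    wtSeq (Real.exp (-θ)) (dualSeqENorm S₀) Φ₀ +
      wtSeq (Real.exp (1 - θ)) (dualSeqENorm S₁) Φ₁

/-- Membership in the closure, inside the space with extended norm `Nj`, of the space with
extended norm `N`. -/
def memClosIn {E : Type*} [AddCommGroup E] (Nj N : E → ℝ≥0∞) (w : E) : Prop :=
  Nj w ≠ ∞ ∧ ∀ ε : ℝ≥0∞, 0 < ε → ∃ u : E, N u ≠ ∞ ∧ Nj (w - u) < ε

open Classical in
/-- The extended norm of the closure, inside the space with extended norm `Nj`, of the
space with extended norm `N`. -/
noncomputable def closENorm {E : Type*} [AddCommGroup E] (Nj N : E → ℝ≥0∞) : E → ℝ≥0∞ :=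
  fun w => if memClosIn Nj N w then Nj w else ∞

/-- Membership in `𝔖^∘`, the closure in `𝔖` of the finitely nonzero sequences with entries
in the closure of the `N`-space inside the `Nj`-space. -/
def memSeqClos {E : Type*} [AddCommGroup E] (S : (ℤ → E) → ℝ≥0∞) (Nj N : E → ℝ≥0∞)
    (x : ℤ → E) : Prop :=
  S x ≠ ∞ ∧ ∀ ε : ℝ≥0∞, 0 < ε → ∃ y : ℤ → E,
    (Function.support y).Finite ∧ (∀ k, memClosIn Nj N (y k)) ∧ S (x - y) < ε

open Classical in
/-- The extended norm of `𝔖^∘`. -/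
noncomputable def seqClosENorm {E : Type*} [AddCommGroup E] (S : (ℤ → E) → ℝ≥0∞)
    (Nj N : E → ℝ≥0∞) : (ℤ → E) → ℝ≥0∞ :=
  fun x => if memSeqClos S Nj N x then S x else ∞

/-- The `(𝔖,𝔗)`-bound of an operator. -/
noncomputable def seqOpENorm {E F : Type*} [AddCommGroup E] [Module ℝ E]
    [AddCommGroup F] [Module ℝ F] (S : (ℤ → E) → ℝ≥0∞) (T : (ℤ → F) → ℝ≥0∞)
    (A : E →ₗ[ℝ] F) : ℝ≥0∞ :=
  ⨆ (x : ℤ → E) (_ : S x ≤ 1), T fun k => A (x k)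

/-- The open strip `𝕊 = {0 < Re z < 1}`. -/
def openStrip : Set ℂ := {z : ℂ | 0 < z.re ∧ z.re < 1}

/-- The closed strip `S̄ = {0 ≤ Re z ≤ 1}`. -/
def closedStrip : Set ℂ := {z : ℂ | 0 ≤ z.re ∧ z.re ≤ 1}

/-- The `k`-th Fourier coefficient of the `2π`-periodic function `t ↦ f (s + it)`. -/
noncomputable def fourierCoef {X : Type*} [NormedAddCommGroup X] [NormedSpace ℂ X]
    (f : ℂ → X) (s : ℝ) (k : ℤ) : X :=
  (2 * (Real.pi : ℂ))⁻¹ • ∫ t in (-Real.pi)..Real.pi,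
    Complex.exp (-(k : ℂ) * Complex.I * (t : ℂ)) • f ((s : ℂ) + (t : ℂ) * Complex.I)

/-- The lower complex formulation norm `‖·‖^{(c)}_{(𝒳₀,𝒳₁)_θ}`. -/
noncomputable def lowerCNorm {E : Type*} [NormedAddCommGroup E] [NormedSpace ℂ E]
    (S₀ S₁ : (ℤ → E) → ℝ≥0∞) (θ : ℝ) (v : E) : ℝ≥0∞ :=
  ⨅ (f : ℂ → E) (_ : ContinuousOn f closedStrip)
    (_ : ∀ z ∈ openStrip, DifferentiableAt ℂ f z)
    (_ : ∀ z ∈ closedStrip, f (z + 2 * (Real.pi : ℂ) * Complex.I) = f z)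
    (_ : f (θ : ℂ) = v),
    max (S₀ fun k => fourierCoef f 0 k) (S₁ fun k => fourierCoef f 1 k)
section AuxENorm

variable {F : Type v} [AddCommGroup F] [Module ℝ F] {N : F → ℝ≥0∞}

theorem aux_zero (hN : IsBanachENorm ℝ N) : N 0 = 0 := by
  refine le_antisymm ?_ zero_le
  have h := hN.2.2.1 (0 : ℝ) 0
  simpa using h

theorem aux_smul_le (hN : IsBanachENorm ℝ N) (c : ℝ) (x : F) :
    N (c • x) ≤ (‖c‖₊ : ℝ≥0∞) * N x := hN.2.2.1 c x

theorem aux_add_le (hN : IsBanachENorm ℝ N) (x y : F) : N (x + y) ≤ N x + N y := hN.2.1 x y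

theorem aux_smul (hN : IsBanachENorm ℝ N) {c : ℝ} (hc : c ≠ 0) (x : F) :
    N (c • x) = (‖c‖₊ : ℝ≥0∞) * N x := by
  refine le_antisymm (hN.2.2.1 c x) ?_
  have h2 : N x ≤ (‖c⁻¹‖₊ : ℝ≥0∞) * N (c • x) := by
    simpa [smul_smul, inv_mul_cancel₀ hc] using hN.2.2.1 c⁻¹ (c • x)
  calc (‖c‖₊ : ℝ≥0∞) * N x ≤ (‖c‖₊ : ℝ≥0∞) * ((‖c⁻¹‖₊ : ℝ≥0∞) * N (c • x)) := by gcongr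
    _ = ((‖c * c⁻¹‖₊ : ℝ≥0∞)) * N (c • x) := by rw [← mul_assoc, ← ENNReal.coe_mul, ← nnnorm_mul]
    _ = N (c • x) := by rw [mul_inv_cancel₀ hc]; simp

theorem aux_neg (hN : IsBanachENorm ℝ N) (x : F) : N (-x) = N x := by
  have h := aux_smul hN (c := (-1 : ℝ)) (by norm_num) x
  simpa using h

theorem aux_sub_le (hN : IsBanachENorm ℝ N) (x y : F) : N (x - y) ≤ N x + N y := by
  rw [sub_eq_add_neg]
  exact (hN.2.1 x (-y)).trans (by rw [aux_neg hN])

theorem aux_sum_le (hN : IsBanachENorm ℝ N) {ι : Type*} (s : Finset ι) (f : ι → F) :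
    N (∑ i ∈ s, f i) ≤ ∑ i ∈ s, N (f i) := by
  classical
  induction s using Finset.induction with
  | empty => simp [aux_zero hN]
  | insert a s h ih =>
      rw [Finset.sum_insert h, Finset.sum_insert h]
      exact (hN.2.1 _ _).trans (by gcongr)

theorem aux_cauchy (hN : IsBanachENorm ℝ N) (g : ℕ → F) (c : ℕ → ℝ≥0∞)
    (hg : ∀ n, N (g n) ≤ c n) (hc : ∑' n, c n ≠ ∞) :
    ∃ L : F, N L ≤ ∑' n, c n ∧
      Tendsto (fun m => N ((∑ i ∈ Finset.range m, g i) - L)) atTop (𝓝 0) := by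
  set f : ℕ → F := fun m => ∑ i ∈ Finset.range m, g i with hf
  have hpart : ∀ m, N (f m) ≤ ∑' n, c n := by
    intro m
    refine ((aux_sum_le hN _ _).trans (Finset.sum_le_sum fun i _ => hg i)).trans ?_
    exact ENNReal.sum_le_tsum _
  have hfin : ∀ m, N (f m) ≠ ∞ := fun m => ne_top_of_le_ne_top hc (hpart m)
  have htail : Tendsto (fun n => ∑' i, c (i + n)) atTop (𝓝 0) :=
    ENNReal.tendsto_sum_nat_add c hc
  have hdiff : ∀ m n : ℕ, n ≤ m → N (f m - f n) ≤ ∑' i, c (i + n) := by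
    intro m n hnm
    have h1 : f m - f n = ∑ i ∈ Finset.Ico n m, g i := by
      rw [hf]; rw [Finset.sum_Ico_eq_sub _ hnm]
    rw [h1]
    refine ((aux_sum_le hN _ _).trans (Finset.sum_le_sum fun i _ => hg i)).trans ?_
    rw [Finset.sum_Ico_eq_sum_range]
    refine (Finset.sum_le_sum fun i _ => le_rfl).trans ?_
    calc ∑ i ∈ Finset.range (m - n), c (n + i)
        ≤ ∑' i, c (n + i) := ENNReal.sum_le_tsum _
      _ = ∑' i, c (i + n) := by simp [add_comm]
  have hC : ∀ ε : ℝ≥0∞, 0 < ε → ∃ n₀ : ℕ, ∀ m, n₀ ≤ m → ∀ n, n₀ ≤ n → N (f m - f n) < ε := by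
    intro ε hε
    have := htail.eventually_lt_const hε
    rw [Filter.eventually_atTop] at this
    obtain ⟨n₀, hn₀⟩ := this
    refine ⟨n₀, fun m hm n hn => ?_⟩
    rcases le_total n m with h | h
    · exact lt_of_le_of_lt ((hdiff m n h).trans (le_rfl)) (hn₀ n hn)
    · have := (hdiff n m h).trans_lt (hn₀ m hm)
      rwa [← aux_neg hN (f n - f m), neg_sub] at this
  obtain ⟨L, hLfin, hLt⟩ := hN.2.2.2 f hfin hC
  refine ⟨L, ?_, hLt⟩
  refine ENNReal.le_of_forall_pos_le_add fun ε hε hlt => ?_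
  have hev : ∀ᶠ m in atTop, N (f m - L) < ε := by
    refine hLt.eventually_lt_const ?_
    exact_mod_cast hε
  obtain ⟨m, hm⟩ := hev.exists
  calc N L ≤ N (f m) + N (L - f m) := by
        have := hN.2.1 (f m) (L - f m)
        simpa using this
    _ = N (f m) + N (f m - L) := by rw [← aux_neg hN (f m - L), neg_sub]
    _ ≤ (∑' n, c n) + ε := add_le_add (hpart m) hm.le

end AuxENorm

section SeqAux

variable {E : Type u} [NormedAddCommGroup E] [NormedSpace ℝ E] {NN : BanachENorm ℝ E}

theorem enSum_le {V : Type*} [AddCommGroup V] (N M : V → ℝ≥0∞) (v w : V) :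
    enSum N M v ≤ N w + M (v - w) := iInf_le _ w

theorem seq_smul_shift (SS : SeqStructure ℝ E NN) {a : ℝ} (ha : a ≠ 0) (y : ℤ → E) (n : ℤ) :
    SS.toFun (fun k => a ^ k • y (k + n)) =
      (‖a ^ (-n)‖₊ : ℝ≥0∞) * SS.toFun (fun k => a ^ k • y k) := by
  have h1 : (fun k => a ^ k • y (k + n)) =
      (a ^ (-n)) • (fun k => (fun j => a ^ j • y j) (k + n)) := by
    funext k
    show a ^ k • y (k + n) = a ^ (-n) • (a ^ (k + n) • y (k + n))
    rw [smul_smul, ← zpow_add₀ ha]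
    congr 2
    omega
  rw [h1, aux_smul SS.isBanachENorm (zpow_ne_zero _ ha)]
  exact congrArg (fun t => (‖a ^ (-n)‖₊ : ℝ≥0∞) * t) (SS.shift (fun j => a ^ j • y j) n)

theorem seq_coord_w (SS : SeqStructure ℝ E NN) {a : ℝ} (ha : a ≠ 0) (y : ℤ → E) (k : ℤ) :
    NN.toFun (y k) ≤ (‖a ^ (-k)‖₊ : ℝ≥0∞) * SS.toFun (fun j => a ^ j • y j) := by
  have h1 : y k = a ^ (-k) • ((fun j => a ^ j • y j) k) := by
    show y k = a ^ (-k) • (a ^ k • y k)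
    rw [smul_smul, ← zpow_add₀ ha]
    have : -k + k = 0 := by omega
    rw [this, zpow_zero, one_smul]
  calc NN.toFun (y k) ≤ (‖a ^ (-k)‖₊ : ℝ≥0∞) * NN.toFun ((fun j => a ^ j • y j) k) := by
        conv_lhs => rw [h1]
        exact aux_smul_le NN.isBanachENorm _ _
    _ ≤ _ := by gcongr; exact SS.coord _ k

theorem NS_add_le (SS : SeqStructure ℝ E NN) (a : ℝ) (y z : ℤ → E) :
    SS.toFun (fun k => a ^ k • (y k + z k)) ≤
      SS.toFun (fun k => a ^ k • y k) + SS.toFun (fun k => a ^ k • z k) := by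
  have h : (fun k => a ^ k • (y k + z k)) =
      (fun k => a ^ k • y k) + (fun k => a ^ k • z k) := by
    funext k; simp [smul_add]
  rw [h]
  exact SS.isBanachENorm.2.1 _ _

theorem NS_sub_le (SS : SeqStructure ℝ E NN) (a : ℝ) (y z : ℤ → E) :
    SS.toFun (fun k => a ^ k • (y k - z k)) ≤
      SS.toFun (fun k => a ^ k • y k) + SS.toFun (fun k => a ^ k • z k) := by
  have h : (fun k => a ^ k • (y k - z k)) =
      (fun k => a ^ k • y k) - (fun k => a ^ k • z k) := by
    funext k; simp [smul_sub]
  rw [h]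
  exact aux_sub_le SS.isBanachENorm _ _

theorem tendsto_enorm_zero {α : Type*} {l : Filter α} {f : α → E} {b : α → ℝ≥0∞}
    (h : ∀ x, (‖f x‖₊ : ℝ≥0∞) ≤ b x) (hb : Tendsto b l (𝓝 0)) : Tendsto f l (𝓝 0) := by
  have h1 : Tendsto (fun x => (‖f x‖₊ : ℝ≥0∞)) l (𝓝 0) :=
    tendsto_of_tendsto_of_tendsto_of_le_of_le tendsto_const_nhds hb (fun x => zero_le) h
  have h2 : Tendsto (fun x => (‖f x‖₊ : ℝ≥0)) l (𝓝 0) := by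
    rw [← ENNReal.coe_zero] at h1
    exact ENNReal.tendsto_coe.mp h1
  rw [tendsto_zero_iff_norm_tendsto_zero]
  have h3 : Tendsto (fun x => ((‖f x‖₊ : ℝ≥0) : ℝ)) l (𝓝 ((0 : ℝ≥0) : ℝ)) :=
    NNReal.tendsto_coe.mpr h2
  simpa [coe_nnnorm] using h3

theorem telescope_Icc {F : Type v} [AddCommGroup F] (g : ℤ → F) (n : ℕ) :
    ∑ k ∈ Finset.Icc (-(n : ℤ)) (n : ℤ), (g k - g (k + 1)) = g (-(n : ℤ)) - g ((n : ℤ) + 1) := by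
  induction n with
  | zero => simp
  | succ n ih =>
      have h1 : Finset.Icc (-((n + 1 : ℕ) : ℤ)) ((n + 1 : ℕ) : ℤ) =
          insert (-((n + 1 : ℕ) : ℤ)) (insert (((n + 1 : ℕ) : ℤ))
            (Finset.Icc (-(n : ℤ)) (n : ℤ))) := by
        ext k
        simp only [Finset.mem_Icc, Finset.mem_insert]
        push_cast
        omega
      have hm1 : (-((n + 1 : ℕ) : ℤ)) ∉ insert (((n + 1 : ℕ) : ℤ)) (Finset.Icc (-(n : ℤ)) (n : ℤ)) := by
        simp only [Finset.mem_insert, Finset.mem_Icc]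
        push_cast
        omega
      have hm2 : (((n + 1 : ℕ) : ℤ)) ∉ Finset.Icc (-(n : ℤ)) (n : ℤ) := by
        simp only [Finset.mem_Icc]
        push_cast
        omega
      rw [h1, Finset.sum_insert hm1, Finset.sum_insert hm2, ih]
      have e1 : (-((n + 1 : ℕ) : ℤ)) + 1 = -(n : ℤ) := by push_cast; ring
      have e2 : ((n + 1 : ℕ) : ℤ) = (n : ℤ) + 1 := by push_cast; ring
      rw [e1, e2]
      abel

end SeqAux

section TailSum

variable {E : Type u} [NormedAddCommGroup E] [NormedSpace ℝ E] {NN : BanachENorm ℝ E}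

theorem tail_sum (SS : SeqStructure ℝ E NN) (hcs : CompleteSpace E)
    (hemb : ∀ u : E, (‖u‖₊ : ℝ≥0∞) ≤ NN.toFun u)
    {a : ℝ} (ha : a ≠ 0) (x : ℤ → E) (hxs : Summable x) (σ : ℕ → ℤ)
    (hσ : Function.Injective σ)
    {V : ℝ≥0∞} (hV : SS.toFun (fun k => a ^ k • x k) ≤ V) (hVne : V ≠ ∞)
    {c : ℝ≥0∞} (hc : ∑' n : ℕ, (‖a ^ (-(σ n))‖₊ : ℝ≥0∞) ≤ c) (hcne : c ≠ ∞) :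
    SS.toFun (fun k => a ^ k • (∑' n : ℕ, x (k + σ n))) ≤ c * V := by
  haveI := hcs
  have hsumk : ∀ k : ℤ, Summable fun n : ℕ => x (k + σ n) := by
    intro k
    exact hxs.comp_injective fun m n h => hσ (by omega)
  set g : ℕ → ℤ → E := fun n => fun k => a ^ k • x (k + σ n) with hg
  have hgn : ∀ n, SS.toFun (g n) ≤ (‖a ^ (-(σ n))‖₊ : ℝ≥0∞) * V := by
    intro n
    rw [hg]
    rw [seq_smul_shift SS ha x (σ n)]
    gcongr
  have htot : ∑' n, (‖a ^ (-(σ n))‖₊ : ℝ≥0∞) * V ≠ ∞ := by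
    rw [ENNReal.tsum_mul_right]
    exact ENNReal.mul_ne_top (ne_top_of_le_ne_top hcne hc) hVne
  obtain ⟨L, hL1, hL2⟩ := aux_cauchy SS.isBanachENorm g _ hgn htot
  have hLeq : L = fun k => a ^ k • (∑' n : ℕ, x (k + σ n)) := by
    funext k
    have hcoordb : ∀ m, (‖(∑ i ∈ Finset.range m, g i) k - L k‖₊ : ℝ≥0∞) ≤
        SS.toFun ((∑ i ∈ Finset.range m, g i) - L) := by
      intro m
      refine (hemb _).trans ?_
      have h := SS.coord ((∑ i ∈ Finset.range m, g i) - L) k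
      simpa using h
    have t1 : Tendsto (fun m => (∑ i ∈ Finset.range m, g i) k) atTop (𝓝 (L k)) := by
      rw [tendsto_iff_edist_tendsto_0]
      refine tendsto_of_tendsto_of_tendsto_of_le_of_le tendsto_const_nhds hL2
        (fun _ => zero_le) ?_
      intro m
      show edist ((∑ i ∈ Finset.range m, g i) k) (L k) ≤
        SS.toFun ((∑ i ∈ Finset.range m, g i) - L)
      rw [edist_eq_enorm_sub]
      exact hcoordb m
    have t2 : Tendsto (fun m => (∑ i ∈ Finset.range m, g i) k) atTop
        (𝓝 (a ^ k • ∑' n : ℕ, x (k + σ n))) := by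
      have hrw : ∀ m, (∑ i ∈ Finset.range m, g i) k
          = a ^ k • ∑ i ∈ Finset.range m, x (k + σ i) := by
        intro m
        rw [Finset.sum_apply, Finset.smul_sum]
      simp only [hrw]
      exact ((hsumk k).hasSum.tendsto_sum_nat).const_smul _
    exact tendsto_nhds_unique t1 t2
  calc SS.toFun (fun k => a ^ k • ∑' n : ℕ, x (k + σ n)) = SS.toFun L := by rw [hLeq]
    _ ≤ ∑' n, (‖a ^ (-(σ n))‖₊ : ℝ≥0∞) * V := hL1
    _ = (∑' n, (‖a ^ (-(σ n))‖₊ : ℝ≥0∞)) * V := ENNReal.tsum_mul_right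
    _ ≤ c * V := by gcongr

end TailSum

section Ambient

variable {E : Type u} [NormedAddCommGroup E] [NormedSpace ℝ E]

theorem emb_left {NA : BanachENorm ℝ E} {M : E → ℝ≥0∞}
    (hM : M 0 = 0)
    (hcomp : ∀ v : E, enSum NA.toFun M v = (‖v‖₊ : ℝ≥0∞)) :
    ∀ w : E, (‖w‖₊ : ℝ≥0∞) ≤ NA.toFun w := by
  intro w
  rw [← hcomp w]
  calc enSum NA.toFun M w ≤ NA.toFun w + M (w - w) := enSum_le _ _ _ _
    _ = NA.toFun w := by rw [sub_self, hM, add_zero]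

theorem emb_right {NA : BanachENorm ℝ E} {M : E → ℝ≥0∞}
    (hcomp : ∀ v : E, enSum NA.toFun M v = (‖v‖₊ : ℝ≥0∞)) :
    ∀ w : E, (‖w‖₊ : ℝ≥0∞) ≤ M w := by
  intro w
  rw [← hcomp w]
  calc enSum NA.toFun M w ≤ NA.toFun 0 + M (w - 0) := enSum_le _ _ _ _
    _ = M w := by rw [aux_zero NA.isBanachENorm, sub_zero, zero_add]

theorem enSum_zero {NA : BanachENorm ℝ E} {M : E → ℝ≥0∞} (hM : M 0 = 0) :
    enSum NA.toFun M 0 = 0 := by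
  refine le_antisymm ?_ zero_le
  calc enSum NA.toFun M 0 ≤ NA.toFun 0 + M (0 - 0) := enSum_le _ _ _ _
    _ = 0 := by rw [sub_zero, hM, aux_zero NA.isBanachENorm, add_zero]

theorem ambient_complete (NX NY NZ : BanachENorm ℝ E)
    (hcomp : ∀ v : E, enSum NX.toFun (enSum NY.toFun NZ.toFun) v = (‖v‖₊ : ℝ≥0∞)) :
    CompleteSpace E := by
  have hembX := emb_left (enSum_zero (aux_zero NZ.isBanachENorm)) hcomp
  have hembYZ := emb_right hcomp
  have hembY : ∀ w : E, (‖w‖₊ : ℝ≥0∞) ≤ NY.toFun w := fun w =>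
    (hembYZ w).trans ((enSum_le NY.toFun NZ.toFun w w).trans
      (by rw [sub_self, aux_zero NZ.isBanachENorm, add_zero]))
  have hembZ : ∀ w : E, (‖w‖₊ : ℝ≥0∞) ≤ NZ.toFun w := fun w =>
    (hembYZ w).trans ((enSum_le NY.toFun NZ.toFun w 0).trans
      (by rw [sub_zero, aux_zero NY.isBanachENorm, zero_add]))
  apply Metric.complete_of_convergent_controlled_sequences (fun n => (1/2) ^ n)
    (fun n => by positivity)
  intro uu hu
  set d : ℕ → E := fun n => uu (n + 1) - uu n with hd
  have hdb : ∀ n, (‖d n‖₊ : ℝ≥0∞) ≤ ENNReal.ofReal ((1/2) ^ n) := by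
    intro n
    rw [← ENNReal.ofReal_coe_nnreal, coe_nnnorm]
    refine (ENNReal.ofReal_le_ofReal ?_)
    have := hu n (n + 1) n (by omega) le_rfl
    rw [dist_eq_norm] at this
    exact this.le
  have hdec : ∀ n, ∃ p q r : E, d n = p + q + r ∧
      NX.toFun p ≤ ENNReal.ofReal (2 * (1/2) ^ n) ∧
      NY.toFun q ≤ ENNReal.ofReal (4 * (1/2) ^ n) ∧
      NZ.toFun r ≤ ENNReal.ofReal (4 * (1/2) ^ n) := by
    intro n
    have h1 : enSum NX.toFun (enSum NY.toFun NZ.toFun) (d n) < ENNReal.ofReal (2 * (1/2) ^ n) := by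
      rw [hcomp]
      refine (hdb n).trans_lt (ENNReal.ofReal_lt_ofReal_iff (by positivity) |>.mpr (by nlinarith [pow_pos (by norm_num : (0:ℝ) < 1/2) n]))
    obtain ⟨p, hp⟩ := iInf_lt_iff.mp h1
    have h2 : enSum NY.toFun NZ.toFun (d n - p) < ENNReal.ofReal (4 * (1/2) ^ n) := by
      refine (le_add_self.trans_lt hp).trans_le (ENNReal.ofReal_le_ofReal ?_)
      nlinarith [pow_pos (by norm_num : (0:ℝ) < 1/2) n]
    obtain ⟨q, hq⟩ := iInf_lt_iff.mp h2
    refine ⟨p, q, d n - p - q, by abel, ?_, ?_, ?_⟩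
    · exact (le_self_add.trans hp.le).trans (ENNReal.ofReal_le_ofReal (by nlinarith [pow_pos (by norm_num : (0:ℝ) < 1/2) n]))
    · exact le_self_add.trans hq.le
    · exact le_add_self.trans hq.le
  choose p q r hpqr hbp hbq hbr using hdec
  have hgeo : ∑' n : ℕ, ENNReal.ofReal (4 * (1/2) ^ n) ≠ ∞ := by
    have : ∀ n : ℕ, ENNReal.ofReal (4 * (1/2) ^ n) = ENNReal.ofReal 4 * (ENNReal.ofReal (1/2)) ^ n := by
      intro n
      rw [ENNReal.ofReal_mul (by norm_num), ENNReal.ofReal_pow (by norm_num)]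
    simp only [this]
    rw [ENNReal.tsum_mul_left, ENNReal.tsum_geometric]
    refine ENNReal.mul_ne_top ENNReal.ofReal_ne_top (ENNReal.inv_ne_top.mpr ?_)
    intro h0
    have hle := tsub_eq_zero_iff_le.mp h0
    have : ENNReal.ofReal (1/2) < 1 := ENNReal.ofReal_lt_one.mpr (by norm_num)
    exact absurd hle (not_le.mpr this)
  have hgeo2 : ∑' n : ℕ, ENNReal.ofReal (2 * (1/2) ^ n) ≠ ∞ := by
    refine ne_top_of_le_ne_top hgeo (ENNReal.tsum_le_tsum fun n => ENNReal.ofReal_le_ofReal ?_)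
    nlinarith [pow_pos (by norm_num : (0:ℝ) < 1/2) n]
  obtain ⟨P, _, hP2⟩ := aux_cauchy NX.isBanachENorm p _ hbp hgeo2
  obtain ⟨Q, _, hQ2⟩ := aux_cauchy NY.isBanachENorm q _ hbq hgeo
  obtain ⟨R, _, hR2⟩ := aux_cauchy NZ.isBanachENorm r _ hbr hgeo
  refine ⟨uu 0 + (P + Q + R), ?_⟩
  have hrepr : ∀ m : ℕ, uu m = (uu 0 + (P + Q + R)) +
      (((∑ i ∈ Finset.range m, p i) - P) + ((∑ i ∈ Finset.range m, q i) - Q)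
        + ((∑ i ∈ Finset.range m, r i) - R)) := by
    intro m
    have h1 : ∑ i ∈ Finset.range m, d i = uu m - uu 0 := by
      rw [hd]
      exact Finset.sum_range_sub uu m
    have h2 : ∑ i ∈ Finset.range m, d i = (∑ i ∈ Finset.range m, p i)
        + (∑ i ∈ Finset.range m, q i) + (∑ i ∈ Finset.range m, r i) := by
      rw [← Finset.sum_add_distrib, ← Finset.sum_add_distrib]
      exact Finset.sum_congr rfl fun i _ => hpqr i
    have h3 : uu m - uu 0 = (∑ i ∈ Finset.range m, p i)
        + (∑ i ∈ Finset.range m, q i) + (∑ i ∈ Finset.range m, r i) := by rw [← h1, h2]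
    have h4 : uu m = uu 0 + ((∑ i ∈ Finset.range m, p i)
        + (∑ i ∈ Finset.range m, q i) + (∑ i ∈ Finset.range m, r i)) := by
      rw [← h3]; abel
    rw [h4]; abel
  have hp0 : Tendsto (fun m => (∑ i ∈ Finset.range m, p i) - P) atTop (𝓝 0) :=
    tendsto_enorm_zero (fun m => hembX _) hP2
  have hq0 : Tendsto (fun m => (∑ i ∈ Finset.range m, q i) - Q) atTop (𝓝 0) :=
    tendsto_enorm_zero (fun m => hembY _) hQ2
  have hr0 : Tendsto (fun m => (∑ i ∈ Finset.range m, r i) - R) atTop (𝓝 0) :=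
    tendsto_enorm_zero (fun m => hembZ _) hR2
  have hconst : Tendsto (fun _ : ℕ => uu 0 + (P + Q + R)) atTop (𝓝 (uu 0 + (P + Q + R))) :=
    tendsto_const_nhds
  have hfin := hconst.add ((hp0.add hq0).add hr0)
  simp only [add_zero, zero_add] at hfin
  exact hfin.congr fun m => (hrepr m).symm

end Ambient

section MeanPair

variable {E : Type u} [NormedAddCommGroup E] [NormedSpace ℝ E]

theorem mean_pair {N₀ N₂ : BanachENorm ℝ E} (S₀ : SeqStructure ℝ E N₀)
    (S₂ : SeqStructure ℝ E N₂) (hcs : CompleteSpace E)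
    (hemb₀ : ∀ u : E, (‖u‖₊ : ℝ≥0∞) ≤ N₀.toFun u)
    (hemb₂ : ∀ u : E, (‖u‖₊ : ℝ≥0∞) ≤ N₂.toFun u)
    {a b : ℝ} (ha : a ≠ 0) (hb : b ≠ 0)
    {ca cb : ℝ≥0∞}
    (hca : ∑' n : ℕ, (‖a ^ (-(-(n : ℤ)))‖₊ : ℝ≥0∞) ≤ ca) (hcane : ca ≠ ∞)
    (hcb : ∑' n : ℕ, (‖b ^ (-((n : ℤ) + 1))‖₊ : ℝ≥0∞) ≤ cb) (hcbne : cb ≠ ∞)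
    (x : ℤ → E) (v : E) (hx : HasSum x v)
    {V : ℝ≥0∞} (h0 : S₀.toFun (fun k => a ^ k • x k) ≤ V)
    (h2 : S₂.toFun (fun k => b ^ k • x k) ≤ V) (hVne : V ≠ ∞) :
    ∃ x0 x1 : ℤ → E, (∀ k, x0 k + x1 k = v) ∧
      S₀.toFun (fun k => a ^ k • x0 k) ≤ ca * V ∧
      S₂.toFun (fun k => b ^ k • x1 k) ≤ cb * V := by
  haveI := hcs
  refine ⟨fun k => ∑' n : ℕ, x (k + -(n : ℤ)), fun k => ∑' n : ℕ, x (k + ((n : ℤ) + 1)),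
    ?_, ?_, ?_⟩
  · intro k
    have hsummable := hx.summable
    have h1 : Summable fun n : ℕ => x ((n : ℤ) + (k + 1)) :=
      hsummable.comp_injective fun m n h => by omega
    have h2' : Summable fun n : ℕ => x (-((n : ℤ) + 1) + (k + 1)) :=
      hsummable.comp_injective fun m n h => by omega
    have hfs : HasSum (fun j : ℤ => x (j + (k + 1))) v :=
      (Equiv.hasSum_iff (Equiv.addRight (k + 1))).mpr hx
    have hcomb : HasSum (fun j : ℤ => x (j + (k + 1)))
        ((∑' n : ℕ, x ((n : ℤ) + (k + 1))) + (∑' n : ℕ, x (-((n : ℤ) + 1) + (k + 1)))) :=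
      HasSum.of_nat_of_neg_add_one h1.hasSum h2'.hasSum
    have hv := hfs.unique hcomb
    have e1 : (∑' n : ℕ, x (k + -(n : ℤ))) = ∑' n : ℕ, x (-((n : ℤ) + 1) + (k + 1)) :=
      tsum_congr fun n => congrArg x (by ring)
    have e2 : (∑' n : ℕ, x (k + ((n : ℤ) + 1))) = ∑' n : ℕ, x ((n : ℤ) + (k + 1)) :=
      tsum_congr fun n => congrArg x (by ring)
    show (∑' n : ℕ, x (k + -(n : ℤ))) + (∑' n : ℕ, x (k + ((n : ℤ) + 1))) = v
    rw [e1, e2, add_comm, ← hv]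
  · refine tail_sum S₀ hcs hemb₀ ha x hx.summable (fun n : ℕ => -(n : ℤ))
      (fun m n h => ?_) h0 hVne hca hcane
    simp only [neg_inj, Nat.cast_inj] at h
    exact h
  · refine tail_sum S₂ hcs hemb₂ hb x hx.summable (fun n : ℕ => (n : ℤ) + 1)
      (fun m n h => ?_) h2 hVne hcb hcbne
    simp only [add_left_inj, Nat.cast_inj] at h
    exact h

end MeanPair

section Construct

variable {E : Type u} [NormedAddCommGroup E] [NormedSpace ℝ E]

theorem construct_u (NX NY NZ : BanachENorm ℝ E)
    (hcomp : ∀ v : E, enSum NX.toFun (enSum NY.toFun NZ.toFun) v = (‖v‖₊ : ℝ≥0∞))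
    (SX : SeqStructure ℝ E NX) (SY : SeqStructure ℝ E NY) (SZ : SeqStructure ℝ E NZ)
    (S T : ℤ → E →ₗ[ℝ] E)
    (hid : ∀ (k : ℤ) (v : E), enSum NX.toFun NY.toFun v ≠ ∞ → S k v + T k v = v)
    {CS CT CU : ℝ≥0∞} (hCSne : CS ≠ ∞) (hCTne : CT ≠ ∞) (hCUne : CU ≠ ∞)
    (hSb : ∀ w : ℤ → E, SX.toFun (fun k => S k (w k)) ≤
      CS * enSum SX.toFun (wtSeq (Real.exp 1) SY.toFun) w)
    (hTb : ∀ w : ℤ → E, wtSeq (Real.exp 1) SY.toFun (fun k => T k (w k)) ≤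
      CT * enSum SX.toFun (wtSeq (Real.exp 1) SY.toFun) w)
    (hUb : ∀ w : ℤ → E, SZ.toFun (fun k => T k (w k)) ≤ CU * SZ.toFun w)
    {θ : ℝ} (hθ0 : 0 < θ) (hθ1 : θ < 1) :
    ∃ K : ℝ≥0∞, K ≠ ∞ ∧ ∀ (v : E) (x z : ℤ → E), HasSum x v → HasSum z v →
      ∀ {Vx Vz : ℝ≥0∞},
      SX.toFun (fun k => Real.exp (-θ) ^ k • x k) ≤ Vx →
      SY.toFun (fun k => Real.exp (1 - θ) ^ k • x k) ≤ Vx →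
      SX.toFun (fun k => Real.exp (-θ) ^ k • z k) ≤ Vz →
      SZ.toFun (fun k => Real.exp (1 - θ) ^ k • z k) ≤ Vz →
      Vx ≠ ∞ → Vz ≠ ∞ →
      ∃ u : ℤ → E, HasSum u v ∧
        max (SX.toFun (fun k => Real.exp (-θ) ^ k • u k))
          (max (SY.toFun (fun k => Real.exp (1 - θ) ^ k • u k))
            (SZ.toFun (fun k => Real.exp (1 - θ) ^ k • u k))) ≤ K * (Vx + Vz) := by
  have hcs : CompleteSpace E := ambient_complete NX NY NZ hcomp
  haveI := hcs
  have hembX : ∀ w : E, (‖w‖₊ : ℝ≥0∞) ≤ NX.toFun w :=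
    emb_left (enSum_zero (aux_zero NZ.isBanachENorm)) hcomp
  have hembYZ := emb_right hcomp
  have hembY : ∀ w : E, (‖w‖₊ : ℝ≥0∞) ≤ NY.toFun w := fun w =>
    (hembYZ w).trans ((enSum_le NY.toFun NZ.toFun w w).trans
      (by rw [sub_self, aux_zero NZ.isBanachENorm, add_zero]))
  have hembZ : ∀ w : E, (‖w‖₊ : ℝ≥0∞) ≤ NZ.toFun w := fun w =>
    (hembYZ w).trans ((enSum_le NY.toFun NZ.toFun w 0).trans
      (by rw [sub_zero, aux_zero NY.isBanachENorm, zero_add]))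
  -- weights
  set A : ℝ := Real.exp (-θ) with hA
  set B : ℝ := Real.exp (1 - θ) with hB
  have hApos : (0 : ℝ) < A := Real.exp_pos _
  have hBpos : (0 : ℝ) < B := Real.exp_pos _
  have hAne : A ≠ 0 := ne_of_gt hApos
  have hBne : B ≠ 0 := ne_of_gt hBpos
  have hA1 : A < 1 := by rw [hA]; exact Real.exp_lt_one_iff.mpr (by linarith)
  have hB1 : 1 < B := by rw [hB]; exact Real.one_lt_exp_iff.mpr (by linarith)
  have hEA : Real.exp 1 * A = B := by rw [hA, hB, ← Real.exp_add]; ring_nf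
  -- power facts
  have hpowPos : ∀ (t : ℝ) (n : ℕ), (‖t ^ ((n : ℤ))‖₊ : ℝ≥0∞) = ((‖t‖₊ : ℝ≥0∞)) ^ n := by
    intro t n
    rw [zpow_natCast, nnnorm_pow, ENNReal.coe_pow]
  have hpowNeg : ∀ (t : ℝ) (n : ℕ), (‖t ^ (-(n : ℤ))‖₊ : ℝ≥0∞) = ((‖t⁻¹‖₊ : ℝ≥0∞)) ^ n := by
    intro t n
    rw [zpow_neg, zpow_natCast, ← inv_pow, nnnorm_pow, ENNReal.coe_pow]
  set rA : ℝ≥0∞ := (‖A‖₊ : ℝ≥0∞) with hrA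
  set rB : ℝ≥0∞ := (‖B⁻¹‖₊ : ℝ≥0∞) with hrB
  have hrA1 : rA < 1 := by
    rw [hrA, ← ENNReal.ofReal_coe_nnreal, coe_nnnorm]
    exact ENNReal.ofReal_lt_one.mpr (by rw [Real.norm_of_nonneg hApos.le]; exact hA1)
  have hrB1 : rB < 1 := by
    rw [hrB, ← ENNReal.ofReal_coe_nnreal, coe_nnnorm]
    refine ENNReal.ofReal_lt_one.mpr ?_
    rw [Real.norm_of_nonneg (by positivity)]
    exact inv_lt_one_of_one_lt₀ hB1
  set cA : ℝ≥0∞ := (1 - rA)⁻¹ with hcA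
  set cB : ℝ≥0∞ := (1 - rB)⁻¹ with hcB
  have hsubne : ∀ r : ℝ≥0∞, r < 1 → (1 - r : ℝ≥0∞) ≠ 0 := by
    intro r hr h0
    exact absurd (tsub_eq_zero_iff_le.mp h0) (not_le.mpr hr)
  have cAne : cA ≠ ∞ := ENNReal.inv_ne_top.mpr (hsubne _ hrA1)
  have cBne : cB ≠ ∞ := ENNReal.inv_ne_top.mpr (hsubne _ hrB1)
  have hgeoA : ∑' n : ℕ, (‖A ^ (-(-(n : ℤ)))‖₊ : ℝ≥0∞) ≤ cA := by
    refine le_of_eq ?_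
    calc ∑' n : ℕ, (‖A ^ (-(-(n : ℤ)))‖₊ : ℝ≥0∞) = ∑' n : ℕ, rA ^ n := by
          refine tsum_congr fun n => ?_
          rw [neg_neg, hpowPos]
      _ = cA := ENNReal.tsum_geometric rA
  have hgeoB : ∑' n : ℕ, (‖B ^ (-((n : ℤ) + 1))‖₊ : ℝ≥0∞) ≤ cB := by
    have he : ∀ n : ℕ, (‖B ^ (-((n : ℤ) + 1))‖₊ : ℝ≥0∞) = rB ^ (n + 1) := by
      intro n
      have h1 : -((n : ℤ) + 1) = -(((n + 1 : ℕ)) : ℤ) := by push_cast; ring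
      rw [h1, hpowNeg]
    calc ∑' n : ℕ, (‖B ^ (-((n : ℤ) + 1))‖₊ : ℝ≥0∞) = ∑' n : ℕ, rB ^ (n + 1) := tsum_congr he
      _ = rB * (1 - rB)⁻¹ := ENNReal.tsum_geometric_add_one rB
      _ ≤ 1 * (1 - rB)⁻¹ := mul_le_mul_left hrB1.le _
      _ = cB := by rw [one_mul]
  set eθ : ℝ≥0∞ := (‖A ^ (-1 : ℤ)‖₊ : ℝ≥0∞) with heθ
  set rB1 : ℝ≥0∞ := (‖B ^ (-1 : ℤ)‖₊ : ℝ≥0∞) with hrB1d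
  set K : ℝ≥0∞ := (1 + eθ) * (cA + CS * (2 * cA + cB)) + (1 + rB1) * (CT * (2 * cA + cB))
      + (1 + rB1) * (CU * cB) with hK
  have hKne : K ≠ ∞ := by
    rw [hK]
    refine ENNReal.add_ne_top.mpr ⟨ENNReal.add_ne_top.mpr ⟨?_, ?_⟩, ?_⟩ <;>
      refine ENNReal.mul_ne_top (ENNReal.add_ne_top.mpr ⟨ENNReal.one_ne_top, ENNReal.coe_ne_top⟩) ?_
    · exact ENNReal.add_ne_top.mpr ⟨cAne, ENNReal.mul_ne_top hCSne
        (ENNReal.add_ne_top.mpr ⟨ENNReal.mul_ne_top (by norm_num) cAne, cBne⟩)⟩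
    · exact ENNReal.mul_ne_top hCTne
        (ENNReal.add_ne_top.mpr ⟨ENNReal.mul_ne_top (by norm_num) cAne, cBne⟩)
    · exact ENNReal.mul_ne_top hCUne cBne
  refine ⟨K, hKne, ?_⟩
  intro v x z hx hz Vx Vz hVx0 hVx1 hVz0 hVz1 hVxne hVzne
  -- mean pairs for x (towards Y) and z (towards Z)
  obtain ⟨x0, x1, hxid, hx0, hx1⟩ := mean_pair SX SY hcs hembX hembY hAne hBne hgeoA cAne
    hgeoB cBne x v hx hVx0 hVx1 hVxne
  obtain ⟨z0, z1, hzid, hz0, hz1⟩ := mean_pair SX SZ hcs hembX hembZ hAne hBne hgeoA cAne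
    hgeoB cBne z v hz hVz0 hVz1 hVzne
  have hz1eq : ∀ k, z1 k - (x0 k - z0 k) = x1 k := by
    intro k
    have h1 := hxid k
    have h2 := hzid k
    have h3 : z1 k = v - z0 k := by rw [← h2]; abel
    rw [h3, ← h1]; abel
  have hdiff : SX.toFun (fun k => A ^ k • (x0 k - z0 k)) ≤ cA * Vx + cA * Vz :=
    (NS_sub_le SX A x0 z0).trans (add_le_add hx0 hz0)
  set D : ℝ≥0∞ := cA * Vx + cA * Vz + cB * Vx with hD
  have hDne : D ≠ ∞ := by
    rw [hD]
    exact ENNReal.add_ne_top.mpr ⟨ENNReal.add_ne_top.mpr ⟨ENNReal.mul_ne_top cAne hVxne,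
      ENNReal.mul_ne_top cAne hVzne⟩, ENNReal.mul_ne_top cBne hVxne⟩
  have hsumsp : enSum SX.toFun (wtSeq (Real.exp 1) SY.toFun) (fun k => A ^ k • z1 k) ≤ D := by
    refine (enSum_le _ _ _ (fun k => A ^ k • (x0 k - z0 k))).trans ?_
    rw [hD]
    refine add_le_add hdiff ?_
    have hfun : (fun k => A ^ k • z1 k) - (fun k => A ^ k • (x0 k - z0 k))
        = fun k => A ^ k • x1 k := by
      funext k
      show A ^ k • z1 k - A ^ k • (x0 k - z0 k) = A ^ k • x1 k
      rw [← smul_sub, hz1eq k]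
    rw [hfun]
    have hwt : wtSeq (Real.exp 1) SY.toFun (fun k => A ^ k • x1 k)
        = SY.toFun (fun k => B ^ k • x1 k) := by
      show SY.toFun (fun k => Real.exp 1 ^ k • (fun k => A ^ k • x1 k) k) = _
      congr 1
      funext k
      show Real.exp 1 ^ k • (A ^ k • x1 k) = B ^ k • x1 k
      rw [smul_smul, ← mul_zpow, hEA]
    rw [hwt]
    exact hx1
  -- operator bounds
  have hSz1 : SX.toFun (fun k => A ^ k • S k (z1 k)) ≤ CS * D := by
    have heq : (fun k => A ^ k • S k (z1 k)) = (fun k => S k (A ^ k • z1 k)) := by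
      funext k; rw [map_smul]
    rw [heq]
    exact (hSb (fun k => A ^ k • z1 k)).trans (mul_le_mul_right hsumsp CS)
  have hTz1Y : SY.toFun (fun k => B ^ k • T k (z1 k)) ≤ CT * D := by
    have heq : SY.toFun (fun k => B ^ k • T k (z1 k))
        = wtSeq (Real.exp 1) SY.toFun (fun k => T k (A ^ k • z1 k)) := by
      show _ = SY.toFun (fun k => Real.exp 1 ^ k • (fun k => T k (A ^ k • z1 k)) k)
      congr 1
      funext k
      show B ^ k • T k (z1 k) = Real.exp 1 ^ k • T k (A ^ k • z1 k)
      rw [map_smul, smul_smul, ← mul_zpow, hEA]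
    rw [heq]
    exact (hTb (fun k => A ^ k • z1 k)).trans (mul_le_mul_right hsumsp CT)
  have hTz1Z : SZ.toFun (fun k => B ^ k • T k (z1 k)) ≤ CU * (cB * Vz) := by
    have heq : (fun k => B ^ k • T k (z1 k)) = (fun k => T k (B ^ k • z1 k)) := by
      funext k; rw [map_smul]
    rw [heq]
    exact (hUb (fun k => B ^ k • z1 k)).trans (mul_le_mul_right hz1 CU)
  -- the identity v - T_k z1_k = z0_k + S_k z1_k
  have hw0eq : ∀ k, v - T k (z1 k) = z0 k + S k (z1 k) := by
    intro k
    have h1ne : NX.toFun (x0 k - z0 k) ≠ ∞ := by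
      refine ne_top_of_le_ne_top (ENNReal.mul_ne_top ENNReal.coe_ne_top
        (ENNReal.add_ne_top.mpr ⟨ENNReal.mul_ne_top cAne hVxne, ENNReal.mul_ne_top cAne hVzne⟩))
        (le_trans (seq_coord_w SX hAne (fun j => x0 j - z0 j) k) (mul_le_mul_right hdiff _))
    have h2ne : NY.toFun (x1 k) ≠ ∞ := by
      refine ne_top_of_le_ne_top (ENNReal.mul_ne_top ENNReal.coe_ne_top
        (ENNReal.mul_ne_top cBne hVxne))
        (le_trans (seq_coord_w SY hBne x1 k) (mul_le_mul_right hx1 _))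
    have hfin : enSum NX.toFun NY.toFun (z1 k) ≠ ∞ := by
      refine ne_top_of_le_ne_top (ENNReal.add_ne_top.mpr ⟨h1ne, h2ne⟩) ?_
      refine (enSum_le _ _ _ (x0 k - z0 k)).trans ?_
      rw [hz1eq k]
    have hst := hid k (z1 k) hfin
    calc v - T k (z1 k) = (z0 k + z1 k) - T k (z1 k) := by rw [hzid k]
      _ = (z0 k + (S k (z1 k) + T k (z1 k))) - T k (z1 k) := by rw [hst]
      _ = z0 k + S k (z1 k) := by abel
  have hw0X : SX.toFun (fun k => A ^ k • (v - T k (z1 k))) ≤ cA * Vz + CS * D := by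
    have heq : (fun k => A ^ k • (v - T k (z1 k))) = fun k => A ^ k • (z0 k + S k (z1 k)) := by
      funext k; rw [hw0eq k]
    rw [heq]
    exact (NS_add_le SX A z0 (fun k => S k (z1 k))).trans (add_le_add hz0 hSz1)
  -- the decomposition u
  set u : ℤ → E := fun k => T k (z1 k) - T (k + 1) (z1 (k + 1)) with hudef
  have huX : SX.toFun (fun k => A ^ k • u k) ≤ (1 + eθ) * (cA * Vz + CS * D) := by
    have heq : SX.toFun (fun k => A ^ k • u k) = SX.toFun
        (fun k => A ^ k • ((v - T (k + 1) (z1 (k + 1))) - (v - T k (z1 k)))) := by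
      congr 1
      funext k
      congr 1
      show T k (z1 k) - T (k + 1) (z1 (k + 1)) = _
      abel
    have h1 : SX.toFun (fun k => A ^ k • (v - T (k + 1) (z1 (k + 1))))
        ≤ eθ * (cA * Vz + CS * D) := by
      rw [heθ]
      calc SX.toFun (fun k => A ^ k • (v - T (k + 1) (z1 (k + 1))))
          = (‖A ^ (-1 : ℤ)‖₊ : ℝ≥0∞) * SX.toFun (fun k => A ^ k • (v - T k (z1 k))) :=
            seq_smul_shift SX hAne (fun j => v - T j (z1 j)) 1
        _ ≤ _ := mul_le_mul_right hw0X _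
    calc SX.toFun (fun k => A ^ k • u k)
        = SX.toFun (fun k => A ^ k • ((v - T (k + 1) (z1 (k + 1))) - (v - T k (z1 k)))) := heq
      _ ≤ SX.toFun (fun k => A ^ k • (v - T (k + 1) (z1 (k + 1))))
          + SX.toFun (fun k => A ^ k • (v - T k (z1 k))) :=
          NS_sub_le SX A (fun k => v - T (k + 1) (z1 (k + 1))) (fun k => v - T k (z1 k))
      _ ≤ eθ * (cA * Vz + CS * D) + 1 * (cA * Vz + CS * D) :=
          add_le_add h1 (by rw [one_mul]; exact hw0X)
      _ = (1 + eθ) * (cA * Vz + CS * D) := by ring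
  have huY : SY.toFun (fun k => B ^ k • u k) ≤ (1 + rB1) * (CT * D) := by
    have h1 : SY.toFun (fun k => B ^ k • T (k + 1) (z1 (k + 1))) ≤ rB1 * (CT * D) := by
      rw [hrB1d]
      calc SY.toFun (fun k => B ^ k • T (k + 1) (z1 (k + 1)))
          = (‖B ^ (-1 : ℤ)‖₊ : ℝ≥0∞) * SY.toFun (fun k => B ^ k • T k (z1 k)) :=
            seq_smul_shift SY hBne (fun j => T j (z1 j)) 1
        _ ≤ _ := mul_le_mul_right hTz1Y _
    calc SY.toFun (fun k => B ^ k • u k)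
        ≤ SY.toFun (fun k => B ^ k • T k (z1 k))
          + SY.toFun (fun k => B ^ k • T (k + 1) (z1 (k + 1))) :=
          NS_sub_le SY B (fun k => T k (z1 k)) (fun k => T (k + 1) (z1 (k + 1)))
      _ ≤ 1 * (CT * D) + rB1 * (CT * D) := add_le_add (by rw [one_mul]; exact hTz1Y) h1
      _ = (1 + rB1) * (CT * D) := by ring
  have huZ : SZ.toFun (fun k => B ^ k • u k) ≤ (1 + rB1) * (CU * (cB * Vz)) := by
    have h1 : SZ.toFun (fun k => B ^ k • T (k + 1) (z1 (k + 1))) ≤ rB1 * (CU * (cB * Vz)) := by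
      rw [hrB1d]
      calc SZ.toFun (fun k => B ^ k • T (k + 1) (z1 (k + 1)))
          = (‖B ^ (-1 : ℤ)‖₊ : ℝ≥0∞) * SZ.toFun (fun k => B ^ k • T k (z1 k)) :=
            seq_smul_shift SZ hBne (fun j => T j (z1 j)) 1
        _ ≤ _ := mul_le_mul_right hTz1Z _
    calc SZ.toFun (fun k => B ^ k • u k)
        ≤ SZ.toFun (fun k => B ^ k • T k (z1 k))
          + SZ.toFun (fun k => B ^ k • T (k + 1) (z1 (k + 1))) :=
          NS_sub_le SZ B (fun k => T k (z1 k)) (fun k => T (k + 1) (z1 (k + 1)))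
      _ ≤ 1 * (CU * (cB * Vz)) + rB1 * (CU * (cB * Vz)) :=
          add_le_add (by rw [one_mul]; exact hTz1Z) h1
      _ = (1 + rB1) * (CU * (cB * Vz)) := by ring
  -- summability helper
  have key : ∀ (f : ℕ → E) (Cb : ℝ≥0∞), Cb ≠ ∞ → ∀ q : ℝ≥0∞, q < 1 →
      (∀ n : ℕ, (‖f n‖₊ : ℝ≥0∞) ≤ q ^ n * Cb) → Summable f := by
    intro f Cb hCb q hq hb
    have h1 : ∑' n : ℕ, (‖f n‖₊ : ℝ≥0∞) ≠ ∞ := by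
      refine ne_top_of_le_ne_top ?_ (ENNReal.tsum_le_tsum hb)
      rw [ENNReal.tsum_mul_right, ENNReal.tsum_geometric]
      exact ENNReal.mul_ne_top (ENNReal.inv_ne_top.mpr (hsubne _ hq)) hCb
    exact Summable.of_nnnorm (ENNReal.tsum_coe_ne_top_iff_summable.mp h1)
  have hMXne : SX.toFun (fun k => A ^ k • (v - T k (z1 k))) ≠ ∞ :=
    ne_top_of_le_ne_top (ENNReal.add_ne_top.mpr ⟨ENNReal.mul_ne_top cAne hVzne,
      ENNReal.mul_ne_top hCSne hDne⟩) hw0X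
  have hMYne : SY.toFun (fun k => B ^ k • T k (z1 k)) ≠ ∞ :=
    ne_top_of_le_ne_top (ENNReal.mul_ne_top hCTne hDne) hTz1Y
  have hcw0 : ∀ k : ℤ, (‖v - T k (z1 k)‖₊ : ℝ≥0∞)
      ≤ (‖A ^ (-k)‖₊ : ℝ≥0∞) * SX.toFun (fun j => A ^ j • (v - T j (z1 j))) := fun k =>
    (hembX _).trans (seq_coord_w SX hAne (fun j => v - T j (z1 j)) k)
  have hcw1 : ∀ k : ℤ, (‖T k (z1 k)‖₊ : ℝ≥0∞)
      ≤ (‖B ^ (-k)‖₊ : ℝ≥0∞) * SY.toFun (fun j => B ^ j • T j (z1 j)) := fun k =>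
    (hembY _).trans (seq_coord_w SY hBne (fun j => T j (z1 j)) k)
  have hsumu : Summable u := by
    refine Summable.of_nat_of_neg_add_one ?_ ?_
    · refine key _ (2 * SY.toFun (fun j => B ^ j • T j (z1 j))) ?_ rB hrB1 ?_
      · exact ENNReal.mul_ne_top (by norm_num) hMYne
      · intro n
        have hb1 : (‖T ((n : ℤ)) (z1 ((n : ℤ)))‖₊ : ℝ≥0∞)
            ≤ rB ^ n * SY.toFun (fun j => B ^ j • T j (z1 j)) := by
          have h := hcw1 (n : ℤ)
          rwa [hpowNeg B n] at h
        have hb2 : (‖T ((n : ℤ) + 1) (z1 ((n : ℤ) + 1))‖₊ : ℝ≥0∞)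
            ≤ rB ^ (n + 1) * SY.toFun (fun j => B ^ j • T j (z1 j)) := by
          have h := hcw1 ((n : ℤ) + 1)
          have he : -((n : ℤ) + 1) = -(((n + 1 : ℕ)) : ℤ) := by push_cast; ring
          rw [he, hpowNeg B (n + 1)] at h
          exact h
        calc (‖u ((n : ℤ))‖₊ : ℝ≥0∞)
            ≤ (‖T ((n : ℤ)) (z1 ((n : ℤ)))‖₊ : ℝ≥0∞)
              + (‖T ((n : ℤ) + 1) (z1 ((n : ℤ) + 1))‖₊ : ℝ≥0∞) := by
              show (‖T ((n : ℤ)) (z1 ((n : ℤ))) - T ((n : ℤ) + 1) (z1 ((n : ℤ) + 1))‖₊ : ℝ≥0∞) ≤ _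
              exact_mod_cast nnnorm_sub_le _ _
          _ ≤ rB ^ n * SY.toFun (fun j => B ^ j • T j (z1 j))
              + rB ^ (n + 1) * SY.toFun (fun j => B ^ j • T j (z1 j)) := add_le_add hb1 hb2
          _ ≤ rB ^ n * SY.toFun (fun j => B ^ j • T j (z1 j))
              + rB ^ n * SY.toFun (fun j => B ^ j • T j (z1 j)) := by
              have hpow : rB ^ (n + 1) ≤ rB ^ n := by
                calc rB ^ (n + 1) = rB ^ n * rB := by rw [pow_succ]
                  _ ≤ rB ^ n * 1 := mul_le_mul_right hrB1.le _
                  _ = rB ^ n := by rw [mul_one]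
              exact add_le_add le_rfl (mul_le_mul_left hpow _)
          _ = rB ^ n * (2 * SY.toFun (fun j => B ^ j • T j (z1 j))) := by ring
    · refine key _ (2 * SX.toFun (fun j => A ^ j • (v - T j (z1 j)))) ?_ rA hrA1 ?_
      · exact ENNReal.mul_ne_top (by norm_num) hMXne
      · intro n
        have hb1 : (‖v - T (-(n : ℤ)) (z1 (-(n : ℤ)))‖₊ : ℝ≥0∞)
            ≤ rA ^ n * SX.toFun (fun j => A ^ j • (v - T j (z1 j))) := by
          have h := hcw0 (-(n : ℤ))
          rwa [neg_neg, hpowPos A n] at h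
        have hb2 : (‖v - T (-((n : ℤ) + 1)) (z1 (-((n : ℤ) + 1)))‖₊ : ℝ≥0∞)
            ≤ rA ^ (n + 1) * SX.toFun (fun j => A ^ j • (v - T j (z1 j))) := by
          have h := hcw0 (-((n : ℤ) + 1))
          have he : -(-((n : ℤ) + 1)) = (((n + 1 : ℕ)) : ℤ) := by push_cast; ring
          rw [he, hpowPos A (n + 1)] at h
          exact h
        have hj : u (-((n : ℤ) + 1)) = (v - T (-(n : ℤ)) (z1 (-(n : ℤ))))
            - (v - T (-((n : ℤ) + 1)) (z1 (-((n : ℤ) + 1)))) := by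
          show T (-((n : ℤ) + 1)) (z1 (-((n : ℤ) + 1)))
              - T (-((n : ℤ) + 1) + 1) (z1 (-((n : ℤ) + 1) + 1)) = _
          have he : -((n : ℤ) + 1) + 1 = -(n : ℤ) := by ring
          rw [he]
          abel
        calc (‖u (-((n : ℤ) + 1))‖₊ : ℝ≥0∞)
            ≤ (‖v - T (-(n : ℤ)) (z1 (-(n : ℤ)))‖₊ : ℝ≥0∞)
              + (‖v - T (-((n : ℤ) + 1)) (z1 (-((n : ℤ) + 1)))‖₊ : ℝ≥0∞) := by
              rw [hj]
              exact_mod_cast nnnorm_sub_le _ _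
          _ ≤ rA ^ n * SX.toFun (fun j => A ^ j • (v - T j (z1 j)))
              + rA ^ (n + 1) * SX.toFun (fun j => A ^ j • (v - T j (z1 j))) := add_le_add hb1 hb2
          _ ≤ rA ^ n * SX.toFun (fun j => A ^ j • (v - T j (z1 j)))
              + rA ^ n * SX.toFun (fun j => A ^ j • (v - T j (z1 j))) := by
              have hpow : rA ^ (n + 1) ≤ rA ^ n := by
                calc rA ^ (n + 1) = rA ^ n * rA := by rw [pow_succ]
                  _ ≤ rA ^ n * 1 := mul_le_mul_right hrA1.le _
                  _ = rA ^ n := by rw [mul_one]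
              exact add_le_add le_rfl (mul_le_mul_left hpow _)
          _ = rA ^ n * (2 * SX.toFun (fun j => A ^ j • (v - T j (z1 j)))) := by ring
  -- identify the sum
  have hmono : Monotone (fun n : ℕ => Finset.Icc (-(n : ℤ)) (n : ℤ)) := by
    intro m n hmn
    refine Finset.Icc_subset_Icc ?_ ?_ <;> omega
  have hexh : ∀ k : ℤ, ∃ n : ℕ, k ∈ Finset.Icc (-(n : ℤ)) (n : ℤ) := by
    intro k
    refine ⟨k.natAbs, ?_⟩
    simp only [Finset.mem_Icc]
    omega
  have hIcc1 : Tendsto (fun n : ℕ => ∑ k ∈ Finset.Icc (-(n : ℤ)) (n : ℤ), u k) atTop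
      (𝓝 (∑' k, u k)) :=
    hsumu.hasSum.comp (tendsto_atTop_finset_of_monotone hmono hexh)
  have hts : ∀ n : ℕ, ∑ k ∈ Finset.Icc (-(n : ℤ)) (n : ℤ), u k
      = v - (v - T (-(n : ℤ)) (z1 (-(n : ℤ)))) - T ((n : ℤ) + 1) (z1 ((n : ℤ) + 1)) := by
    intro n
    have ht := telescope_Icc (fun j => T j (z1 j)) n
    calc ∑ k ∈ Finset.Icc (-(n : ℤ)) (n : ℤ), u k
        = ∑ k ∈ Finset.Icc (-(n : ℤ)) (n : ℤ),
            ((fun j => T j (z1 j)) k - (fun j => T j (z1 j)) (k + 1)) := rfl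
      _ = T (-(n : ℤ)) (z1 (-(n : ℤ))) - T ((n : ℤ) + 1) (z1 ((n : ℤ) + 1)) := ht
      _ = v - (v - T (-(n : ℤ)) (z1 (-(n : ℤ)))) - T ((n : ℤ) + 1) (z1 ((n : ℤ) + 1)) := by abel
  have hdecay0 : Tendsto (fun n : ℕ => v - T (-(n : ℤ)) (z1 (-(n : ℤ)))) atTop (𝓝 0) := by
    refine tendsto_enorm_zero
      (b := fun n : ℕ => rA ^ n * SX.toFun (fun j => A ^ j • (v - T j (z1 j)))) ?_ ?_
    · intro n
      have h := hcw0 (-(n : ℤ))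
      rwa [neg_neg, hpowPos A n] at h
    · have := ENNReal.Tendsto.mul_const
        (ENNReal.tendsto_pow_atTop_nhds_zero_of_lt_one hrA1)
        (b := SX.toFun (fun j => A ^ j • (v - T j (z1 j)))) (Or.inr hMXne)
      simpa using this
  have hdecay1 : Tendsto (fun n : ℕ => T ((n : ℤ) + 1) (z1 ((n : ℤ) + 1))) atTop (𝓝 0) := by
    refine tendsto_enorm_zero
      (b := fun n : ℕ => rB ^ (n + 1) * SY.toFun (fun j => B ^ j • T j (z1 j))) ?_ ?_
    · intro n
      have h := hcw1 ((n : ℤ) + 1)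
      have he : -((n : ℤ) + 1) = -(((n + 1 : ℕ)) : ℤ) := by push_cast; ring
      rw [he, hpowNeg B (n + 1)] at h
      exact h
    · have h1 : Tendsto (fun n : ℕ => rB ^ (n + 1)) atTop (𝓝 0) :=
        (ENNReal.tendsto_pow_atTop_nhds_zero_of_lt_one hrB1).comp (tendsto_add_atTop_nat 1)
      have := ENNReal.Tendsto.mul_const h1
        (b := SY.toFun (fun j => B ^ j • T j (z1 j))) (Or.inr hMYne)
      simpa using this
  have hIcc2 : Tendsto (fun n : ℕ => ∑ k ∈ Finset.Icc (-(n : ℤ)) (n : ℤ), u k) atTop (𝓝 v) := by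
    have hcombo := (tendsto_const_nhds (x := v) (f := atTop (α := ℕ))).sub hdecay0 |>.sub hdecay1
    rw [sub_zero, sub_zero] at hcombo
    exact hcombo.congr fun n => (hts n).symm
  have hSv : HasSum u v := by
    have heqv := tendsto_nhds_unique hIcc1 hIcc2
    rw [← heqv]
    exact hsumu.hasSum
  refine ⟨u, hSv, ?_⟩
  have hWD : D ≤ (2 * cA + cB) * (Vx + Vz) := by
    rw [hD]
    have hexp : (2 * cA + cB) * (Vx + Vz)
        = (cA * Vx + cA * Vz + cB * Vx) + (cA * Vx + cA * Vz + cB * Vz) := by ring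
    rw [hexp]
    exact le_self_add
  have hbX : SX.toFun (fun k => A ^ k • u k) ≤ K * (Vx + Vz) := by
    refine huX.trans ?_
    calc (1 + eθ) * (cA * Vz + CS * D)
        ≤ (1 + eθ) * (cA * (Vx + Vz) + CS * ((2 * cA + cB) * (Vx + Vz))) := by
          gcongr
          all_goals first | exact hWD | exact le_add_self
      _ = ((1 + eθ) * (cA + CS * (2 * cA + cB))) * (Vx + Vz) := by ring
      _ ≤ K * (Vx + Vz) := by
          refine mul_le_mul_left ?_ _
          rw [hK]
          exact le_self_add.trans le_self_add
  have hbY : SY.toFun (fun k => B ^ k • u k) ≤ K * (Vx + Vz) := by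
    refine huY.trans ?_
    calc (1 + rB1) * (CT * D)
        ≤ (1 + rB1) * (CT * ((2 * cA + cB) * (Vx + Vz))) := by gcongr
      _ = ((1 + rB1) * (CT * (2 * cA + cB))) * (Vx + Vz) := by ring
      _ ≤ K * (Vx + Vz) := by
          refine mul_le_mul_left ?_ _
          rw [hK]
          exact le_add_self.trans le_self_add
  have hbZ : SZ.toFun (fun k => B ^ k • u k) ≤ K * (Vx + Vz) := by
    refine huZ.trans ?_
    calc (1 + rB1) * (CU * (cB * Vz))
        ≤ (1 + rB1) * (CU * (cB * (Vx + Vz))) := by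
          gcongr
          all_goals exact le_add_self
      _ = ((1 + rB1) * (CU * cB)) * (Vx + Vz) := by ring
      _ ≤ K * (Vx + Vz) := by
          refine mul_le_mul_left ?_ _
          rw [hK]
          exact le_add_self
  exact max_le hbX (max_le hbY hbZ)


end Construct

/-- interpolation of intersections. Let `𝒳 = [X,𝔖]`, `𝒴 = [Y,𝔗]`,
`𝒵 = [Z,𝔘]` be sequentially structured Banach spaces with `(X,Y,Z)` a compatible triple
(here `E` is the sum space `X+Y+Z`).  If there are linear operators `S_k : X+Y → X` and
`T_k : X+Y+Z → Y+Z` with `S_k + T_k = I` on `X+Y`, such that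
`‖(S_k v_k)‖_𝔖 ≲ ‖v⃗‖_{𝔖+𝔗(e)}`, `‖(T_k v_k)‖_{𝔗(e)} ≲ ‖v⃗‖_{𝔖+𝔗(e)}` and
`‖(T_k z_k)‖_𝔘 ≲ ‖z⃗‖_𝔘`, then `(𝒳,𝒴)_θ ∩ (𝒳,𝒵)_θ = (𝒳,𝒴∩𝒵)_θ` with equivalent
norms, for every `θ ∈ (0,1)`. -/
theorem statement19 {E : Type u} [NormedAddCommGroup E] [NormedSpace ℝ E]
    (NX NY NZ : BanachENorm ℝ E)
    (hcomp : ∀ v : E, enSum NX.toFun (enSum NY.toFun NZ.toFun) v = (‖v‖₊ : ℝ≥0∞))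
    (SX : SeqStructure ℝ E NX) (SY : SeqStructure ℝ E NY) (SZ : SeqStructure ℝ E NZ)
    (S T : ℤ → E →ₗ[ℝ] E)
    (hScodom : ∀ (k : ℤ) (v : E), enSum NX.toFun NY.toFun v ≠ ∞ → NX.toFun (S k v) ≠ ∞)
    (hTcodom : ∀ (k : ℤ) (v : E), enSum NY.toFun NZ.toFun (T k v) ≠ ∞)
    (hid : ∀ (k : ℤ) (v : E), enSum NX.toFun NY.toFun v ≠ ∞ → S k v + T k v = v)
    (hS : ∃ C : ℝ≥0∞, C ≠ ∞ ∧ ∀ v : ℤ → E,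
      SX.toFun (fun k => S k (v k)) ≤
        C * enSum SX.toFun (wtSeq (Real.exp 1) SY.toFun) v)
    (hT : ∃ C : ℝ≥0∞, C ≠ ∞ ∧ ∀ v : ℤ → E,
      wtSeq (Real.exp 1) SY.toFun (fun k => T k (v k)) ≤
        C * enSum SX.toFun (wtSeq (Real.exp 1) SY.toFun) v)
    (hU : ∃ C : ℝ≥0∞, C ≠ ∞ ∧ ∀ z : ℤ → E,
      SZ.toFun (fun k => T k (z k)) ≤ C * SZ.toFun z)
    (θ : ℝ) (hθ : θ ∈ Set.Ioo (0 : ℝ) 1) :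
    ∃ C : ℝ≥0∞, C ≠ ∞ ∧ ∀ v : E,
      (max (interpENorm SX.toFun SY.toFun θ v) (interpENorm SX.toFun SZ.toFun θ v) ≤
        C * interpENorm SX.toFun (enInter SY.toFun SZ.toFun) θ v) ∧
      (interpENorm SX.toFun (enInter SY.toFun SZ.toFun) θ v ≤
        C * max (interpENorm SX.toFun SY.toFun θ v)
          (interpENorm SX.toFun SZ.toFun θ v)) := by
  obtain ⟨CS, hCSne, hSb⟩ := hS
  obtain ⟨CT, hCTne, hTb⟩ := hT
  obtain ⟨CU, hCUne, hUb⟩ := hU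
  obtain ⟨hθ0, hθ1⟩ := hθ
  obtain ⟨K, hKne, hKmain⟩ := construct_u NX NY NZ hcomp SX SY SZ S T hid hCSne hCTne hCUne
    hSb hTb hUb hθ0 hθ1
  set C : ℝ≥0∞ := 1 + 2 * (K + 1) with hC
  have hK1ne : (2 * (K + 1)) ≠ ∞ :=
    ENNReal.mul_ne_top (by norm_num) (ENNReal.add_ne_top.mpr ⟨hKne, ENNReal.one_ne_top⟩)
  have hCne : C ≠ ∞ := by
    rw [hC]
    exact ENNReal.add_ne_top.mpr ⟨ENNReal.one_ne_top, hK1ne⟩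
  have hC1 : (1 : ℝ≥0∞) ≤ C := by rw [hC]; exact le_self_add
  have hC0 : C ≠ 0 := by
    intro h
    rw [h] at hC1
    exact (by norm_num : ¬ ((1 : ℝ≥0∞) ≤ 0)) hC1
  refine ⟨C, hCne, fun v => ⟨?_, ?_⟩⟩
  · -- easy direction
    have h1 : interpENorm SX.toFun SY.toFun θ v ≤
        interpENorm SX.toFun (enInter SY.toFun SZ.toFun) θ v := by
      refine le_iInf fun w => le_iInf fun hw => ?_
      exact (iInf₂_le w hw).trans (max_le_max le_rfl (le_max_left _ _))
    have h2 : interpENorm SX.toFun SZ.toFun θ v ≤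
        interpENorm SX.toFun (enInter SY.toFun SZ.toFun) θ v := by
      refine le_iInf fun w => le_iInf fun hw => ?_
      exact (iInf₂_le w hw).trans (max_le_max le_rfl (le_max_right _ _))
    refine (max_le h1 h2).trans ?_
    conv_lhs => rw [← one_mul (interpENorm SX.toFun (enInter SY.toFun SZ.toFun) θ v)]
    exact mul_le_mul_left hC1 _
  · rcases eq_or_ne (max (interpENorm SX.toFun SY.toFun θ v)
      (interpENorm SX.toFun SZ.toFun θ v)) ∞ with hM | hM
    · rw [hM, ENNReal.mul_top hC0]
      exact le_top
    · have hIYne : interpENorm SX.toFun SY.toFun θ v ≠ ∞ :=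
        ne_top_of_le_ne_top hM (le_max_left _ _)
      have hIZne : interpENorm SX.toFun SZ.toFun θ v ≠ ∞ :=
        ne_top_of_le_ne_top hM (le_max_right _ _)
      have hmain : interpENorm SX.toFun (enInter SY.toFun SZ.toFun) θ v ≤ 2 * (K + 1) *
          max (interpENorm SX.toFun SY.toFun θ v) (interpENorm SX.toFun SZ.toFun θ v) := by
        refine ENNReal.le_of_forall_pos_le_add fun ε hε hlt => ?_
        have hK10 : (2 * (K + 1)) ≠ 0 := by
          intro h
          rcases mul_eq_zero.mp h with h2 | h2
          · norm_num at h2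
          · exact (by simp : (K + 1 : ℝ≥0∞) ≠ 0) h2
        set δ : ℝ≥0∞ := (ε : ℝ≥0∞) / (2 * (K + 1)) with hδ
        have hδ0 : δ ≠ 0 := by
          rw [hδ, Ne, ENNReal.div_eq_zero_iff]
          push_neg
          exact ⟨by exact_mod_cast hε.ne', hK1ne⟩
        have hδne : δ ≠ ∞ := by
          rw [hδ]
          exact (ENNReal.div_lt_top ENNReal.coe_ne_top hK10).ne
        have hx1 : interpENorm SX.toFun SY.toFun θ v
            < interpENorm SX.toFun SY.toFun θ v + δ := ENNReal.lt_add_right hIYne hδ0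
        obtain ⟨x, hxlt⟩ := iInf_lt_iff.mp hx1
        obtain ⟨hxsum, hxVlt⟩ := iInf_lt_iff.mp hxlt
        have hz1 : interpENorm SX.toFun SZ.toFun θ v
            < interpENorm SX.toFun SZ.toFun θ v + δ := ENNReal.lt_add_right hIZne hδ0
        obtain ⟨z, hzlt⟩ := iInf_lt_iff.mp hz1
        obtain ⟨hzsum, hzVlt⟩ := iInf_lt_iff.mp hzlt
        have hVxne : interpENorm SX.toFun SY.toFun θ v + δ ≠ ∞ :=
          ENNReal.add_ne_top.mpr ⟨hIYne, hδne⟩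
        have hVzne : interpENorm SX.toFun SZ.toFun θ v + δ ≠ ∞ :=
          ENNReal.add_ne_top.mpr ⟨hIZne, hδne⟩
        obtain ⟨u, husum, hub⟩ := hKmain v x z hxsum hzsum
          ((le_max_left _ _).trans hxVlt.le) ((le_max_right _ _).trans hxVlt.le)
          ((le_max_left _ _).trans hzVlt.le) ((le_max_right _ _).trans hzVlt.le)
          hVxne hVzne
        have hstep : interpENorm SX.toFun (enInter SY.toFun SZ.toFun) θ v
            ≤ max (SX.toFun fun k => Real.exp (-θ) ^ k • u k)
              (max (SY.toFun fun k => Real.exp (1 - θ) ^ k • u k)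
                (SZ.toFun fun k => Real.exp (1 - θ) ^ k • u k)) := iInf₂_le u husum
        set M : ℝ≥0∞ := max (interpENorm SX.toFun SY.toFun θ v)
          (interpENorm SX.toFun SZ.toFun θ v) with hMdef
        calc interpENorm SX.toFun (enInter SY.toFun SZ.toFun) θ v
            ≤ max (SX.toFun fun k => Real.exp (-θ) ^ k • u k)
              (max (SY.toFun fun k => Real.exp (1 - θ) ^ k • u k)
                (SZ.toFun fun k => Real.exp (1 - θ) ^ k • u k)) := hstep
          _ ≤ K * ((interpENorm SX.toFun SY.toFun θ v + δ)
              + (interpENorm SX.toFun SZ.toFun θ v + δ)) := hub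
          _ ≤ K * ((M + δ) + (M + δ)) :=
              mul_le_mul_right (add_le_add (add_le_add (le_max_left _ _) le_rfl)
                (add_le_add (le_max_right _ _) le_rfl)) K
          _ = 2 * K * M + 2 * K * δ := by ring
          _ ≤ 2 * (K + 1) * M + 2 * (K + 1) * δ :=
              add_le_add (mul_le_mul_left (mul_le_mul_right le_self_add 2) M)
                (mul_le_mul_left (mul_le_mul_right le_self_add 2) δ)
          _ ≤ 2 * (K + 1) * M + ε := by
              refine add_le_add le_rfl ?_
              rw [hδ]
              exact ENNReal.mul_div_le
      refine hmain.trans ?_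
      exact mul_le_mul_left (by rw [hC]; exact le_add_self) _
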